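/- The inf-extension of the lower C-distribution function is invariant under the closure operation of the lattice 𝒢(ℝ^d, C): for every set D ⊆ ℝ^d, inf_{z ∈ cl co (D + C)} F_{X,C}(z) = inf_{z ∈ D} F_{X,C}(z) (with inf over the empty set equal to +∞). -/
import Mathlib


open MeasureTheory Set Filter Topology
open scoped ENNReal Pointwise

noncomputable section

def dotp {d : ℕ} (w z : Fin d → ℝ) : ℝ := ∑ i, w i * z i

def dualCone {d : ℕ} (C : Set (Fin d → ℝ)) : Set (Fin d → ℝ) :=
  {w | ∀ z ∈ C, 0 ≤ dotp w z}

def Fw {d : ℕ} {Ω : Type*} [MeasurableSpace Ω] (μ : Measure Ω)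
    (X : Ω → Fin d → ℝ) (w z : Fin d → ℝ) : ℝ≥0∞ :=
  μ {ω | dotp w (X ω) ≤ dotp w z}

def FC {d : ℕ} {Ω : Type*} [MeasurableSpace Ω] (μ : Measure Ω)
    (X : Ω → Fin d → ℝ) (C : Set (Fin d → ℝ)) (z : Fin d → ℝ) : ℝ≥0∞ :=
  ⨅ w ∈ dualCone C \ {0}, Fw μ X w z

def Qlo {d : ℕ} {Ω : Type*} [MeasurableSpace Ω] (μ : Measure Ω)
    (X : Ω → Fin d → ℝ) (C : Set (Fin d → ℝ)) (p : ℝ≥0∞) : Set (Fin d → ℝ) :=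
  {z | p ≤ FC μ X C z}

lemma dotp_add {d : ℕ} (w x y : Fin d → ℝ) : dotp w (x + y) = dotp w x + dotp w y := by
  simp [dotp, mul_add, Finset.sum_add_distrib]

lemma dotp_combo {d : ℕ} (w x y : Fin d → ℝ) (a b : ℝ) :
    dotp w (a • x + b • y) = a * dotp w x + b * dotp w y := by
  simp only [dotp, Pi.add_apply, Pi.smul_apply, smul_eq_mul, Finset.mul_sum]
  rw [← Finset.sum_add_distrib]
  congr 1; ext i; ring

lemma dotp_continuous {d : ℕ} (w : Fin d → ℝ) : Continuous fun z => dotp w z := by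
  unfold dotp
  exact continuous_finset_sum _ fun i _ =>
    (continuous_const.mul (continuous_apply i))

theorem stmt_11 {d : ℕ} {Ω : Type*} [MeasurableSpace Ω] (μ : Measure Ω)
    [IsProbabilityMeasure μ] (X : Ω → Fin d → ℝ) (hX : Measurable X)
    (C : Set (Fin d → ℝ)) (hCne : C.Nonempty) (hCcl : IsClosed C)
    (hCco : Convex ℝ C) (hCcone : ∀ r : ℝ, 0 ≤ r → ∀ x ∈ C, r • x ∈ C)
    (hCproper : C ≠ univ) (D : Set (Fin d → ℝ)) :
    ⨅ z ∈ closure (convexHull ℝ (D + C)), FC μ X C z = ⨅ z ∈ D, FC μ X C z := by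
  have h0C : (0 : Fin d → ℝ) ∈ C := by
    obtain ⟨x, hx⟩ := hCne
    simpa using hCcone 0 le_rfl x hx
  have hsub : D ⊆ closure (convexHull ℝ (D + C)) := fun z hz =>
    subset_closure (subset_convexHull ℝ _ ⟨z, hz, 0, h0C, by simp⟩)
  set m := ⨅ z ∈ D, FC μ X C z with hm
  refine le_antisymm (le_iInf₂ fun z hz => iInf₂_le z (hsub hz)) (le_iInf₂ fun z hz => ?_)
  -- show m ≤ FC μ X C z for z in the closure
  refine le_iInf₂ fun w hw => ?_
  -- w is in dualCone C \ {0}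
  set Y : Ω → ℝ := fun ω => dotp w (X ω) with hY
  have hYm : Measurable Y := by
    apply Finset.measurable_sum
    intro i _
    exact measurable_const.mul ((measurable_pi_apply i).comp hX)
  set a : ℝ := dotp w z with ha
  -- Sub-claim A: every point of the convex hull dominates some point of D in the w-direction
  have hull_sub : convexHull ℝ (D + C) ⊆ {x | ∃ e ∈ D, dotp w e ≤ dotp w x} := by
    apply convexHull_min
    · rintro x ⟨e, he, c, hc, rfl⟩
      exact ⟨e, he, by
        rw [dotp_add]
        linarith [hw.1 c hc]⟩
    · rintro x ⟨e1, he1, h1⟩ y ⟨e2, he2, h2⟩ s t hs ht hst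
      rcases le_total (dotp w e1) (dotp w e2) with h | h
      · refine ⟨e1, he1, ?_⟩
        rw [dotp_combo]
        have he : s * dotp w e1 + t * dotp w e1 = dotp w e1 := by
          rw [← add_mul, hst, one_mul]
        linarith [mul_le_mul_of_nonneg_left h1 hs, mul_le_mul_of_nonneg_left (h.trans h2) ht]
      · refine ⟨e2, he2, ?_⟩
        rw [dotp_combo]
        have he : s * dotp w e2 + t * dotp w e2 = dotp w e2 := by
          rw [← add_mul, hst, one_mul]
        linarith [mul_le_mul_of_nonneg_left (h.trans h1) hs, mul_le_mul_of_nonneg_left h2 ht]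
  -- Key: for every ε > 0, m ≤ μ {ω | Y ω ≤ a + ε}
  have key : ∀ ε : ℝ, 0 < ε → m ≤ μ {ω | Y ω ≤ a + ε} := by
    intro ε hε
    have hzU : z ∈ (fun x => dotp w x) ⁻¹' Iio (a + ε) := by
      simp [ha, hε]
    obtain ⟨z', hz'U, hz'H⟩ := (_root_.mem_closure_iff.mp hz) _
      ((isOpen_Iio).preimage (dotp_continuous w)) hzU
    obtain ⟨e, heD, hee⟩ := hull_sub hz'H
    have h1 : m ≤ FC μ X C e := iInf₂_le e heD
    have h2 : FC μ X C e ≤ Fw μ X w e := iInf₂_le w hw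
    have h3 : Fw μ X w e ≤ μ {ω | Y ω ≤ a + ε} := by
      apply measure_mono
      intro ω hω
      simp only [mem_setOf_eq] at hω ⊢
      have : dotp w z' < a + ε := hz'U
      linarith
    exact h1.trans (h2.trans h3)
  -- Conclude via continuity from above
  have hFw : Fw μ X w z = μ {ω | Y ω ≤ a} := rfl
  rw [hFw]
  set s : ℕ → Set Ω := fun n => {ω | Y ω ≤ a + 1 / (n + 1)} with hs
  have hmeas : ∀ n, NullMeasurableSet (s n) μ := fun n =>
    (hYm measurableSet_Iic : MeasurableSet {ω | Y ω ≤ a + 1 / (n + 1)}).nullMeasurableSet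
  have hanti : Antitone s := by
    intro n k hnk ω hω
    simp only [hs, mem_setOf_eq] at hω ⊢
    have : (1 : ℝ) / (k + 1) ≤ 1 / (n + 1) := by
      apply one_div_le_one_div_of_le
      · positivity
      · exact_mod_cast Nat.succ_le_succ hnk
    linarith
  have hinter : ⋂ n, s n = {ω | Y ω ≤ a} := by
    ext ω
    simp only [mem_iInter, hs, mem_setOf_eq]
    constructor
    · intro h
      by_contra hlt
      push_neg at hlt
      obtain ⟨n, hn⟩ := exists_nat_one_div_lt (sub_pos.mpr hlt)
      linarith [h n]
    · intro h n
      have : (0:ℝ) < 1 / (n + 1) := by positivity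
      linarith
  have htend : Tendsto (μ ∘ s) atTop (𝓝 (μ (⋂ n, s n))) :=
    tendsto_measure_iInter_atTop hmeas hanti ⟨0, measure_ne_top μ _⟩
  rw [hinter] at htend
  refine ge_of_tendsto htend (Eventually.of_forall fun n => ?_)
  exact key (1 / (n + 1)) (by positivity)
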